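/- arXiv:1808.06454 — 2 statements merged into one kernel-verified Lean document; each statement's English description precedes it below -/
import Mathlib

section
/- Let M be a zonoid in ℝ² with support function h and diameter d, and for k ≥ 1 let M_k be its k-th canonical approximation with support function h_k. Then sup_{θ∈ℝ} |h_k(θ) − h(θ)| ≤ π(1+√2)·d/(2k); in particular d_H(M, M_k) ≤ π(1+√2)·d/(2k). -/
open MeasureTheory Real

noncomputable section

abbrev E2 := EuclideanSpace ℝ (Fin 2)

/-- The unit vector at angle `θ`. -/
def uvec (θ : ℝ) : E2 := (WithLp.equiv 2 (Fin 2 → ℝ)).symm ![Real.cos θ, Real.sin θ]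

/-- Rotation of the plane by angle `θ`. -/
def rot (θ : ℝ) (x : E2) : E2 :=
  (WithLp.equiv 2 (Fin 2 → ℝ)).symm
    ![Real.cos θ * x 0 - Real.sin θ * x 1, Real.sin θ * x 0 + Real.cos θ * x 1]

/-- The support function of a set `M ⊆ ℝ²`, as a function of the angle `θ`. -/
def supp (M : Set E2) (θ : ℝ) : ℝ := sSup ((fun x : E2 => (inner ℝ x (uvec θ) : ℝ)) '' M)

/-- The excluded area function: the area of the difference body `M - R_θ M`. -/
def Ex (θ : ℝ) (M : Set E2) : ℝ :=
  (volume {p : E2 | ∃ x ∈ M, ∃ y ∈ M, p = x - rot θ y}).toReal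

/-- The `k`-th canonical approximation of `M`. -/
def canonApprox (M : Set E2) (k : ℕ) : Set E2 :=
  ⋂ i ∈ Finset.Icc 1 (4 * k),
    {x : E2 | (inner ℝ x (uvec ((i : ℝ) * π / (2 * k))) : ℝ) ≤ supp M ((i : ℝ) * π / (2 * k))}

/-!
Let `δ = π / (2k)` and `d = diam M`. Every `x ∈ M_k` satisfies `⟪x, u_a⟫ ≤ h(a)` at all grid
angles `a ∈ δℤ`. For `a ≤ θ ≤ a + δ`,
`sin δ • u_θ = sin (a + δ - θ) • u_a + sin (θ - a) • u_{a+δ}` with nonnegative coefficients whose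
sum is at most `(1 + δ²/2) sin δ`. Since `M` is symmetric, `0 ≤ h ≤ d/2` and `h` is
`d/2`-Lipschitz, so `⟪x, u_θ⟫ ≤ (1 + δ²/2)(h(θ) + dδ/2) ≤ h(θ) + (1 + √2)dδ`.
For the Hausdorff distance, if `y` is the point of `M` nearest to `x ∈ M_k`, then `x - y` is an
outer normal of `M` at `y`, so `‖x - y‖` is at most `h_k - h` in the direction of `x - y`.
-/

open scoped RealInnerProductSpace

lemma inner_uvec (x : E2) (θ : ℝ) : ⟪x, uvec θ⟫ = x 0 * cos θ + x 1 * sin θ := by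
  simp only [uvec, WithLp.equiv_symm_apply, PiLp.inner_apply, RCLike.inner_apply, ringHom_apply,
    Fin.sum_univ_two, Matrix.cons_val_zero, Matrix.cons_val_one]
  ring

lemma norm_uvec (θ : ℝ) : ‖uvec θ‖ = 1 := by
  simp [EuclideanSpace.norm_eq, Fin.sum_univ_two, uvec]

lemma norm_uvec_sub_uvec_le (a b : ℝ) : ‖uvec a - uvec b‖ ≤ |a - b| := by
  have hsq : ‖uvec a - uvec b‖ ^ 2 = 2 - 2 * cos (a - b) := by
    rw [EuclideanSpace.norm_eq, sq_sqrt (by positivity)]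
    simp only [uvec, WithLp.equiv_symm_apply, PiLp.sub_apply, norm_eq_abs, sq_abs,
      Fin.sum_univ_two, Matrix.cons_val_zero, Matrix.cons_val_one, cos_sub]
    nlinarith [sin_sq_add_cos_sq a, sin_sq_add_cos_sq b]
  have hcos : 1 - (a - b) ^ 2 / 2 ≤ cos (a - b) := one_sub_sq_div_two_le_cos
  rw [← sq_le_sq₀ (norm_nonneg _) (abs_nonneg _), sq_abs]
  linarith

lemma uvec_periodic : Function.Periodic uvec (2 * π) := fun θ => by
  simp [uvec]

lemma exists_eq_norm_smul_uvec (w : E2) : ∃ θ, w = ‖w‖ • uvec θ := by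
  set z : ℂ := ⟨w 0, w 1⟩
  have hz : ‖z‖ = ‖w‖ := by
    simp [EuclideanSpace.norm_eq, Fin.sum_univ_two, Complex.norm_def, Complex.normSq_mk, z, sq]
  refine ⟨z.arg, ?_⟩
  ext i
  fin_cases i
  all_goals simp [uvec, ← hz, z]

lemma sin_sub_mul_inner_uvec (x : E2) (a b θ : ℝ) :
    sin (b - a) * ⟪x, uvec θ⟫ = sin (b - θ) * ⟪x, uvec a⟫ + sin (θ - a) * ⟪x, uvec b⟫ := by
  simp only [inner_uvec, sin_sub]
  ring

lemma sin_sub_add_sin_le {δ : ℝ} (s : ℝ) (hδ0 : 0 < δ) (hδ : δ ≤ π / 2) :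
    sin (δ - s) + sin s ≤ sin δ * (1 + δ ^ 2 / 2) := by
  have hsum : sin (δ - s) + sin s = 2 * sin (δ / 2) * cos (δ / 2 - s) := by
    rw [show δ - s = 2 * (δ / 2) - s by ring, sin_sub, sin_two_mul, cos_two_mul', cos_sub]
    linear_combination (-sin s) * sin_sq_add_cos_sq (δ / 2)
  have hprod : sin δ = 2 * sin (δ / 2) * cos (δ / 2) := by
    rw [← sin_two_mul, mul_div_cancel₀ _ two_ne_zero]
  have hsin : 0 < sin (δ / 2) := sin_pos_of_pos_of_lt_pi (by positivity) (by linarith [pi_pos])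
  have hcos : 1 - (δ / 2) ^ 2 / 2 ≤ cos (δ / 2) := one_sub_sq_div_two_le_cos
  have hδ2 : δ ≤ 2 := by linarith [pi_le_four]
  have hinv : 1 ≤ cos (δ / 2) * (1 + δ ^ 2 / 2) := by
    have hδsq : δ ^ 2 ≤ 4 := by nlinarith
    nlinarith [mul_le_mul_of_nonneg_right hcos (by positivity : (0 : ℝ) ≤ 1 + δ ^ 2 / 2),
      mul_nonneg (sq_nonneg δ) (sub_nonneg.2 hδsq)]
  rw [hsum, hprod]
  nlinarith [cos_le_one (δ / 2 - s)]

lemma inner_uvec_le_of_le_of_le {x : E2} {a δ θ C : ℝ} (hδ0 : 0 < δ) (hδ : δ ≤ π / 2)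
    (haθ : a ≤ θ) (hθa : θ ≤ a + δ) (hC : 0 ≤ C)
    (ha : ⟪x, uvec a⟫ ≤ C) (hb : ⟪x, uvec (a + δ)⟫ ≤ C) :
    ⟪x, uvec θ⟫ ≤ (1 + δ ^ 2 / 2) * C := by
  have hπ : δ ≤ π := by linarith [pi_pos]
  have hsinδ : 0 < sin δ := sin_pos_of_pos_of_lt_pi hδ0 (by linarith [pi_pos])
  have hsin₁ : 0 ≤ sin (δ - (θ - a)) := sin_nonneg_of_nonneg_of_le_pi (by linarith) (by linarith)
  have hsin₂ : 0 ≤ sin (θ - a) := sin_nonneg_of_nonneg_of_le_pi (by linarith) (by linarith)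
  have hinterp := sin_sub_mul_inner_uvec x a (a + δ) θ
  rw [add_sub_cancel_left, show a + δ - θ = δ - (θ - a) by ring] at hinterp
  refine le_of_mul_le_mul_left ?_ hsinδ
  calc sin δ * ⟪x, uvec θ⟫
      ≤ (sin (δ - (θ - a)) + sin (θ - a)) * C := by
        rw [hinterp, add_mul]
        gcongr
    _ ≤ sin δ * (1 + δ ^ 2 / 2) * C := by gcongr; exact sin_sub_add_sin_le _ hδ0 hδ
    _ = sin δ * ((1 + δ ^ 2 / 2) * C) := by ring

section SupportFunction

variable {M : Set E2}

lemma bddAbove_inner_uvec_image (hM : IsCompact M) (θ : ℝ) :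
    BddAbove ((fun x : E2 => ⟪x, uvec θ⟫) '' M) :=
  (hM.image (continuous_id.inner continuous_const)).bddAbove

lemma inner_le_supp (hM : IsCompact M) {x : E2} (hx : x ∈ M) (θ : ℝ) :
    ⟪x, uvec θ⟫ ≤ supp M θ :=
  le_csSup (bddAbove_inner_uvec_image hM θ) ⟨x, hx, rfl⟩

lemma supp_le {c θ : ℝ} (hM : M.Nonempty) (h : ∀ x ∈ M, ⟪x, uvec θ⟫ ≤ c) : supp M θ ≤ c :=
  csSup_le (hM.image _) (by rintro _ ⟨x, hx, rfl⟩; exact h x hx)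

lemma supp_mono {N : Set E2} {θ : ℝ} (hM : M.Nonempty) (hMN : M ⊆ N)
    (hN : BddAbove ((fun x : E2 => ⟪x, uvec θ⟫) '' N)) : supp M θ ≤ supp N θ :=
  csSup_le_csSup hN (hM.image _) (Set.image_mono hMN)

lemma supp_periodic (M : Set E2) : Function.Periodic (supp M) (2 * π) := fun θ => by
  simp only [supp, uvec_periodic θ]

lemma supp_nonneg (hM : M.Nonempty) (hcpt : IsCompact M) (hsymm : M = -M) (θ : ℝ) :
    0 ≤ supp M θ := by
  obtain ⟨x, hx⟩ := hM
  have hnx : -x ∈ M := by rw [hsymm]; simpa using hx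
  have h₁ := inner_le_supp hcpt hx θ
  have h₂ := inner_le_supp hcpt hnx θ
  rw [inner_neg_left] at h₂
  linarith

lemma norm_le_half_diam (hM : Bornology.IsBounded M) (hsymm : M = -M) {x : E2} (hx : x ∈ M) :
    ‖x‖ ≤ Metric.diam M / 2 := by
  have hnx : -x ∈ M := by rw [hsymm]; simpa using hx
  have hdist : dist x (-x) = 2 * ‖x‖ := by
    rw [dist_eq_norm, sub_neg_eq_add, ← two_smul ℝ x, norm_smul, Real.norm_two]
  linarith [Metric.dist_le_diam_of_mem hM hx hnx]

lemma supp_le_of_norm_le {R θ : ℝ} (hM : M.Nonempty) (hR : ∀ x ∈ M, ‖x‖ ≤ R) :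
    supp M θ ≤ R :=
  supp_le hM fun x hx => (real_inner_le_norm _ _).trans (by rw [norm_uvec, mul_one]; exact hR x hx)

lemma supp_le_supp_add {R : ℝ} (hM : M.Nonempty) (hcpt : IsCompact M) (hR : ∀ x ∈ M, ‖x‖ ≤ R)
    (a θ : ℝ) : supp M a ≤ supp M θ + R * |a - θ| := by
  refine supp_le hM fun x hx => ?_
  have hR0 : 0 ≤ R := (norm_nonneg x).trans (hR x hx)
  calc ⟪x, uvec a⟫ = ⟪x, uvec θ⟫ + ⟪x, uvec a - uvec θ⟫ := by rw [inner_sub_right]; ring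
    _ ≤ supp M θ + ‖x‖ * ‖uvec a - uvec θ‖ :=
        add_le_add (inner_le_supp hcpt hx θ) (real_inner_le_norm _ _)
    _ ≤ supp M θ + R * |a - θ| := by
        gcongr
        · exact hR x hx
        · exact norm_uvec_sub_uvec_le a θ

end SupportFunction

section CanonicalApproximation

variable {M : Set E2}

lemma subset_canonApprox (hcpt : IsCompact M) (k : ℕ) : M ⊆ canonApprox M k := by
  intro x hx
  simp only [canonApprox, Set.mem_iInter]
  exact fun i _ => inner_le_supp hcpt hx _

lemma inner_uvec_le_supp_of_mem_canonApprox {k : ℕ} (hk : 1 ≤ k) {x : E2}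
    (hx : x ∈ canonApprox M k) (j : ℤ) :
    ⟪x, uvec (j * (π / (2 * k)))⟫ ≤ supp M (j * (π / (2 * k))) := by
  -- the index `(j - 1) % 4k + 1 ∈ [1, 4k]` gives the same angle modulo `2π`
  obtain ⟨r, q, hr₀, hr₁, hj⟩ : ∃ r q : ℤ, 0 ≤ r ∧ r < 4 * k ∧ j - 1 = r + 4 * k * q :=
    ⟨(j - 1) % (4 * k), (j - 1) / (4 * k), Int.emod_nonneg _ (by omega),
      Int.emod_lt_of_pos _ (by omega), (Int.emod_add_mul_ediv _ _).symm⟩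
  lift r to ℕ using hr₀
  have hmem : r + 1 ∈ Finset.Icc 1 (4 * k) := Finset.mem_Icc.2 ⟨by omega, by omega⟩
  have hangle : (j : ℝ) * (π / (2 * k)) = ((r + 1 : ℕ) : ℝ) * π / (2 * k) + q * (2 * π) := by
    have hjR : (j : ℝ) = r + 1 + 4 * k * q := by
      exact_mod_cast (by linarith : j = r + 1 + 4 * k * q)
    rw [hjR]
    push_cast
    field_simp
    ring
  simp only [canonApprox, Set.mem_iInter] at hx
  rw [hangle, uvec_periodic.int_mul q, supp_periodic M |>.int_mul q]
  exact hx (r + 1) hmem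

theorem inner_uvec_le_supp_add_of_mem_canonApprox (hM : M.Nonempty) (hcpt : IsCompact M)
    (hsymm : M = -M) {k : ℕ} (hk : 1 ≤ k) {x : E2} (hx : x ∈ canonApprox M k) (θ : ℝ) :
    ⟪x, uvec θ⟫ ≤ supp M θ + π * (1 + √2) * Metric.diam M / (2 * k) := by
  set d := Metric.diam M
  set δ : ℝ := π / (2 * k)
  have hk' : (1 : ℝ) ≤ k := by exact_mod_cast hk
  have hδ0 : 0 < δ := by positivity
  have hδ : δ ≤ π / 2 := div_le_div_of_nonneg_left pi_pos.le two_pos (by linarith)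
  have hR : ∀ y ∈ M, ‖y‖ ≤ d / 2 := fun y hy => norm_le_half_diam hcpt.isBounded hsymm hy
  set j : ℤ := ⌊θ / δ⌋
  have hjθ : j * δ ≤ θ := (le_div_iff₀ hδ0).1 (Int.floor_le _)
  have hθj : θ ≤ j * δ + δ := by
    have := (div_lt_iff₀ hδ0).1 (Int.lt_floor_add_one (θ / δ))
    linarith
  set H := supp M θ
  have hH₀ : 0 ≤ H := supp_nonneg hM hcpt hsymm θ
  have hH₁ : H ≤ d / 2 := supp_le_of_norm_le hM hR
  have hgrid : ∀ i : ℤ, |i * δ - θ| ≤ δ → ⟪x, uvec (i * δ)⟫ ≤ H + d / 2 * δ := fun i hi =>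
    (inner_uvec_le_supp_of_mem_canonApprox hk hx i).trans
      ((supp_le_supp_add hM hcpt hR _ θ).trans (by gcongr))
  have hinterp : ⟪x, uvec θ⟫ ≤ (1 + δ ^ 2 / 2) * (H + d / 2 * δ) := by
    refine inner_uvec_le_of_le_of_le hδ0 hδ hjθ hθj (by positivity)
      (hgrid j (abs_le.2 ⟨by linarith, by linarith⟩)) ?_
    simpa [add_mul] using hgrid (j + 1) (abs_le.2 ⟨by push_cast; linarith, by push_cast; linarith⟩)
  have hδ2 : δ ≤ 2 := by linarith [pi_le_four]
  have hdδ : 0 ≤ d * δ := by positivity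
  calc ⟪x, uvec θ⟫ ≤ (1 + δ ^ 2 / 2) * (H + d / 2 * δ) := hinterp
    _ ≤ H + (1 + √2) * d * δ := by
        nlinarith [mul_le_mul_of_nonneg_right hH₁ (sq_nonneg δ), one_lt_sqrt_two,
          mul_nonneg hdδ (sub_nonneg.2 hδ2), mul_nonneg (mul_nonneg hdδ hδ0.le) (sub_nonneg.2 hδ2),
          mul_nonneg hdδ (sub_nonneg.2 one_lt_sqrt_two.le)]
    _ = H + π * (1 + √2) * d / (2 * k) := by
        simp only [δ]
        ring

end CanonicalApproximation

theorem hausdorffDist_le_of_forall_inner_uvec_le {M N : Set E2} (hM : M.Nonempty)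
    (hcpt : IsCompact M) (hconv : Convex ℝ M) (hMN : M ⊆ N) {ε : ℝ} (hε : 0 ≤ ε)
    (h : ∀ x ∈ N, ∀ θ, ⟪x, uvec θ⟫ ≤ supp M θ + ε) : Metric.hausdorffDist M N ≤ ε := by
  refine Metric.hausdorffDist_le_of_mem_dist hε (fun x hx => ⟨x, hMN hx, by simpa using hε⟩)
    fun x hx => ?_
  obtain ⟨y, hy, hxy⟩ := hcpt.exists_infDist_eq_dist hM x
  refine ⟨y, hy, ?_⟩
  have hobtuse : ∀ z ∈ M, ⟪x - y, z - y⟫ ≤ 0 := by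
    refine (norm_eq_iInf_iff_real_inner_le_zero hconv hy).1 ?_
    simp only [← dist_eq_norm, ← hxy, Metric.infDist_eq_iInf]
  rw [dist_eq_norm]
  obtain ⟨θ, hθ⟩ := exists_eq_norm_smul_uvec (x - y)
  set r := ‖x - y‖
  have hr₀ : 0 ≤ r := norm_nonneg _
  rcases hr₀.eq_or_lt with hr | hr
  · rw [← hr]; exact hε
  have hsupp : supp M θ ≤ ⟪y, uvec θ⟫ := supp_le hM fun z hz => by
    have := hobtuse z hz
    rw [hθ, real_inner_smul_left, inner_sub_right, real_inner_comm z, real_inner_comm y] at this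
    linarith [nonpos_of_mul_nonpos_right this hr]
  have hxθ : ⟪x, uvec θ⟫ = ⟪y, uvec θ⟫ + r := by
    have : ⟪x - y, uvec θ⟫ = r := by
      conv_lhs => rw [hθ]
      rw [real_inner_smul_left, real_inner_self_eq_norm_sq, norm_uvec, one_pow, mul_one]
    rw [inner_sub_left] at this
    linarith
  linarith [h x hx θ]

theorem stmt17 (M : Set E2) (hne : M.Nonempty) (hcpt : IsCompact M) (hconv : Convex ℝ M)
    (hsymm : M = -M) (k : ℕ) (hk : 1 ≤ k) :
    (∀ θ : ℝ, |supp (canonApprox M k) θ - supp M θ| ≤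
      π * (1 + Real.sqrt 2) * Metric.diam M / (2 * k)) ∧
    Metric.hausdorffDist M (canonApprox M k) ≤
      π * (1 + Real.sqrt 2) * Metric.diam M / (2 * k) := by
  set ε := π * (1 + √2) * Metric.diam M / (2 * k)
  have hε : 0 ≤ ε := by positivity
  have hsub := subset_canonApprox hcpt k
  have hbound : ∀ x ∈ canonApprox M k, ∀ θ, ⟪x, uvec θ⟫ ≤ supp M θ + ε :=
    fun x hx θ => inner_uvec_le_supp_add_of_mem_canonApprox hne hcpt hsymm hk hx θ
  refine ⟨fun θ => abs_sub_le_iff.2 ⟨?_, ?_⟩,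
    hausdorffDist_le_of_forall_inner_uvec_le hne hcpt hconv hsub hε hbound⟩
  · linarith [supp_le (hne.mono hsub) fun x hx => hbound x hx θ]
  · have hbdd : BddAbove ((fun x : E2 => ⟪x, uvec θ⟫) '' canonApprox M k) :=
      ⟨supp M θ + ε, by rintro _ ⟨x, hx, rfl⟩; exact hbound x hx θ⟩
    linarith [supp_mono hne hsub hbdd]
end
end

section
/- Let M be a zonoid in ℝ² with diameter d, and for k ≥ 1 let M_{2k} be its 2k-th canonical approximation. Then, with ε = π(1+√2)·d/(4k), one has sup_{θ∈ℝ} | Ex(θ,M) − Ex(θ,M_{2k}) | ≤ 16·d·ε + 4π·ε². In particular there is a constant C depending only on d such that sup_θ |Ex(θ,M) − Ex(θ,M_{2k})| ≤ C/k. -/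
open MeasureTheory Real

noncomputable section

/-!
The canonical approximation `M_n` is circumscribed about `M`, with normals forming a
`π / (4n)`-net of the unit circle. If `m` is the point of `M` nearest to `x ∈ M_n`, then `m`
maximises `⟪·, u⟫` on `M` for `u` the direction of `x - m`; testing the defining inequality of
`M_n` in the normal nearest to `u` gives `dist x m ≤ diam M · π / (2n)`. Hence the difference
body `M_n - R_θ M_n` contains `D = M - R_θ M` and lies in the `r`-neighbourhood of `D`, with
`r = diam M · π / n`.

The Euclidean `r`-neighbourhood of a planar convex body `D` lies in the square one, which is `D`
plus two orthogonal segments of length `2r`. By Cavalieri, adding such a segment to a convex body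
adds at most `2r` times the length of a projection of the body, so the area grows by at most
`4r · diam D + 4r²`. For `n = 2k` this bounds the difference of excluded areas by
`16 d τ + 16 τ²` with `τ = d π / (4k)`, which is below the stated bound since `ε = (1 + √2) τ`.
-/

section

open Set Metric
open scoped Pointwise ENNReal InnerProductSpace

lemma uvec_apply_zero (θ : ℝ) : uvec θ 0 = Real.cos θ := rfl

lemma uvec_apply_one (θ : ℝ) : uvec θ 1 = Real.sin θ := rfl

lemma norm_uvec_sub_uvec_le_s18 (α β : ℝ) : ‖uvec α - uvec β‖ ≤ |α - β| := by
  rw [← Real.sqrt_sq_eq_abs, EuclideanSpace.norm_eq]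
  gcongr
  simp only [Fin.sum_univ_two, PiLp.sub_apply, uvec_apply_zero, uvec_apply_one, Real.norm_eq_abs,
    sq_abs]
  nlinarith [Real.cos_sub α β, Real.one_sub_sq_div_two_le_cos (x := α - β),
    Real.sin_sq_add_cos_sq α, Real.sin_sq_add_cos_sq β]

lemma exists_uvec_eq {u : E2} (hu : ‖u‖ = 1) : ∃ φ, uvec φ = u := by
  set z := Complex.orthonormalBasisOneI.repr.symm u
  have hz : ‖z‖ = 1 := (LinearIsometryEquiv.norm_map _ u).trans hu
  have hz0 : z ≠ 0 := by rintro h; simp [h] at hz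
  refine ⟨Complex.arg z, ?_⟩
  refine PiLp.ext (Fin.forall_fin_two.2 ⟨?_, ?_⟩)
  · rw [uvec_apply_zero, Complex.cos_arg hz0, hz, div_one]
    simp [z]
  · rw [uvec_apply_one, Complex.sin_arg, hz, div_one]
    simp [z]

lemma uvec_toIcoMod (a φ : ℝ) : uvec (toIcoMod Real.two_pi_pos a φ) = uvec φ := by
  rw [← self_sub_toIcoDiv_zsmul, zsmul_eq_mul]
  simp only [uvec, Real.cos_sub_int_mul_two_pi, Real.sin_sub_int_mul_two_pi]

lemma exists_uvec_near {n : ℕ} (hn : 1 ≤ n) {u : E2} (hu : ‖u‖ = 1) :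
    ∃ i ∈ Finset.Icc 1 (4 * n), ‖uvec ((i : ℝ) * π / (2 * n)) - u‖ ≤ π / (4 * n) := by
  obtain ⟨φ, rfl⟩ := exists_uvec_eq hu
  have hn' : (1 : ℝ) ≤ n := by exact_mod_cast hn
  set β := π / (2 * n)
  have hβ : 0 < β := by positivity
  set ψ := toIcoMod Real.two_pi_pos (β / 2) φ
  obtain ⟨hψ₁, hψ₂⟩ : ψ ∈ Ico (β / 2) (β / 2 + 2 * π) := toIcoMod_mem_Ico _ _ _
  have hlow : 1 / 2 ≤ ψ / β := by rw [le_div_iff₀ hβ]; linarith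
  have hup : ψ / β < 4 * n + 1 / 2 := by
    rw [div_lt_iff₀ hβ]
    have : 2 * π = 4 * n * β := by simp only [β]; field_simp; ring
    linarith
  set i := ⌊ψ / β + 1 / 2⌋₊
  have hi₁ : (i : ℝ) ≤ ψ / β + 1 / 2 := Nat.floor_le (by linarith)
  have hi₂ : ψ / β + 1 / 2 < i + 1 := Nat.lt_floor_add_one _
  refine ⟨i, Finset.mem_Icc.2 ⟨(Nat.one_le_floor_iff _).2 (by linarith), ?_⟩, ?_⟩
  · have : i < 4 * n + 1 := (Nat.floor_lt (by linarith)).2 (by push_cast; linarith)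
    omega
  · have h₁ : (i : ℝ) * β ≤ ψ + β / 2 := by
      have := mul_le_mul_of_nonneg_right hi₁ hβ.le
      rwa [add_mul, div_mul_cancel₀ _ hβ.ne', one_div_mul_eq_div] at this
    have h₂ : ψ - β / 2 < i * β := by
      have := mul_lt_mul_of_pos_right hi₂ hβ
      rw [add_mul, add_mul, div_mul_cancel₀ _ hβ.ne', one_div_mul_eq_div, one_mul] at this
      linarith
    have hβ₂ : π / (4 * n) = β / 2 := by simp only [β]; field_simp; ring
    rw [← uvec_toIcoMod (β / 2) φ, mul_div_assoc]
    change ‖uvec (i * β) - uvec ψ‖ ≤ _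
    exact (norm_uvec_sub_uvec_le_s18 _ _).trans (abs_le.2 ⟨by linarith, by linarith⟩)

lemma rot_apply_zero (θ : ℝ) (x : E2) : rot θ x 0 = Real.cos θ * x 0 - Real.sin θ * x 1 := rfl

lemma rot_apply_one (θ : ℝ) (x : E2) : rot θ x 1 = Real.sin θ * x 0 + Real.cos θ * x 1 := rfl

lemma rot_add (θ : ℝ) (x y : E2) : rot θ (x + y) = rot θ x + rot θ y := by
  refine PiLp.ext (Fin.forall_fin_two.2 ⟨?_, ?_⟩) <;>
    simp only [PiLp.add_apply, rot_apply_zero, rot_apply_one] <;> ring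

lemma rot_smul (θ c : ℝ) (x : E2) : rot θ (c • x) = c • rot θ x := by
  refine PiLp.ext (Fin.forall_fin_two.2 ⟨?_, ?_⟩) <;>
    simp only [PiLp.smul_apply, smul_eq_mul, rot_apply_zero, rot_apply_one] <;> ring

lemma norm_rot (θ : ℝ) (x : E2) : ‖rot θ x‖ = ‖x‖ := by
  simp only [EuclideanSpace.norm_eq, Fin.sum_univ_two, Real.norm_eq_abs, sq_abs, rot_apply_zero,
    rot_apply_one]
  congr 1
  linear_combination (x 0 ^ 2 + x 1 ^ 2) * Real.sin_sq_add_cos_sq θ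

def rotLI (θ : ℝ) : E2 →ₗᵢ[ℝ] E2 where
  toFun := rot θ
  map_add' := rot_add θ
  map_smul' := rot_smul θ
  norm_map' := norm_rot θ

lemma norm_le_diam_div_two_of_neg_eq {F : Type*} [NormedAddCommGroup F] [NormedSpace ℝ F]
    {M : Set F} (hb : Bornology.IsBounded M) (hsymm : M = -M) {y : F} (hy : y ∈ M) :
    ‖y‖ ≤ diam M / 2 := by
  have hy' : -y ∈ M := by rw [hsymm]; simpa using hy
  have h := dist_le_diam_of_mem hb hy hy'
  rw [dist_eq_norm, sub_neg_eq_add, ← two_smul ℝ y, norm_smul, Real.norm_two] at h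
  linarith

lemma Convex.inner_le_inner_of_infDist_eq_dist {F : Type*} [NormedAddCommGroup F]
    [InnerProductSpace ℝ F] {M : Set F} (hMc : Convex ℝ M) {m x : F} (hm : m ∈ M)
    (hxm : infDist x M = dist x m) {w : F} (hw : w ∈ M) :
    ⟪w, x - m⟫_ℝ ≤ ⟪m, x - m⟫_ℝ := by
  have hnear : ‖x - m‖ = ⨅ w : M, ‖x - w‖ := by
    simp_rw [← dist_eq_norm, ← infDist_eq_iInf, hxm]
  have h := (norm_eq_iInf_iff_real_inner_le_zero hMc hm).1 hnear w hw
  rw [inner_sub_right, real_inner_comm w, real_inner_comm m] at h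
  linarith

lemma infDist_mul_one_sub_le {F : Type*} [NormedAddCommGroup F] [InnerProductSpace ℝ F]
    {M : Set F} (hM : IsCompact M) (hMc : Convex ℝ M) (hne : M.Nonempty) {R : ℝ}
    (hR : ∀ y ∈ M, ‖y‖ ≤ R) {U : Set F} {η : ℝ} (hη : 0 ≤ η)
    (hU : ∀ u : F, ‖u‖ = 1 → ∃ v ∈ U, ‖v - u‖ ≤ η) {x : F}
    (hx : ∀ v ∈ U, ⟪x, v⟫_ℝ ≤ sSup ((fun y => ⟪y, v⟫_ℝ) '' M)) :
    infDist x M * (1 - η) ≤ 2 * R * η := by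
  obtain ⟨m, hm, hxm⟩ := hM.exists_infDist_eq_dist hne x
  have hR0 : 0 ≤ R := (norm_nonneg m).trans (hR m hm)
  rcases eq_or_ne x m with rfl | hxm'
  · rw [hxm, dist_self, zero_mul]; positivity
  have ht : 0 < dist x m := dist_pos.2 hxm'
  set u := (dist x m)⁻¹ • (x - m)
  have hu : ‖u‖ = 1 := by simp [u, norm_smul, ← dist_eq_norm, abs_of_pos ht, ht.ne']
  have hxmu : x - m = dist x m • u := by simp [u, smul_smul, mul_inv_cancel₀ ht.ne']
  obtain ⟨v, hv, hvu⟩ := hU u hu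
  -- `m` maximises `⟪·, u⟫` on `M`, and moving the direction from `u` to `v` changes the
  -- support function by at most `R * η`.
  have hsupp : sSup ((fun y => ⟪y, v⟫_ℝ) '' M) ≤ ⟪m, u⟫_ℝ + R * η := by
    refine csSup_le (hne.image _) ?_
    rintro _ ⟨w, hw, rfl⟩
    have hmax : ⟪w, u⟫_ℝ ≤ ⟪m, u⟫_ℝ := by
      simp only [u, real_inner_smul_right]
      exact mul_le_mul_of_nonneg_left (hMc.inner_le_inner_of_infDist_eq_dist hm hxm hw)
        (inv_nonneg.2 ht.le)
    have h : ⟪w, v - u⟫_ℝ ≤ R * η :=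
      (real_inner_le_norm w _).trans (mul_le_mul (hR w hw) hvu (norm_nonneg _) hR0)
    rw [inner_sub_right] at h
    linarith
  have hxv : ⟪m, u⟫_ℝ + dist x m - (R + dist x m) * η ≤ ⟪x, v⟫_ℝ := by
    have hx_norm : ‖x‖ ≤ R + dist x m :=
      calc ‖x‖ = ‖m + (x - m)‖ := by rw [add_sub_cancel]
        _ ≤ R + dist x m := (norm_add_le _ _).trans (add_le_add (hR m hm) (dist_eq_norm x m).ge)
    have h : -((R + dist x m) * η) ≤ ⟪x, v - u⟫_ℝ :=
      (neg_le_neg (mul_le_mul hx_norm hvu (norm_nonneg _) (by positivity))).trans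
        (neg_le_of_abs_le (abs_real_inner_le_norm x _))
    have hxu : ⟪x - m, u⟫_ℝ = dist x m := by
      rw [hxmu, real_inner_smul_left, real_inner_self_eq_norm_sq, hu, one_pow, mul_one]
    rw [inner_sub_right] at h
    rw [inner_sub_left] at hxu
    linarith
  rw [hxm]
  linarith [hx v hv]

lemma subset_canonApprox_s18 {M : Set E2} (hM : IsCompact M) (n : ℕ) : M ⊆ canonApprox M n :=
  fun _ hx => mem_iInter₂.2 fun i _ =>
    le_csSup (hM.image (continuous_id.inner continuous_const)).bddAbove
      (mem_image_of_mem (fun y : E2 => ⟪y, uvec ((i : ℝ) * π / (2 * n))⟫_ℝ) hx)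

lemma canonApprox_subset_cthickening {M : Set E2} (hM : IsCompact M) (hMc : Convex ℝ M)
    (hne : M.Nonempty) (hsymm : M = -M) {n : ℕ} (hn : 2 ≤ n) :
    canonApprox M n ⊆ cthickening (diam M * π / (2 * n)) M := by
  intro x hx
  have hn' : (2 : ℝ) ≤ n := by exact_mod_cast hn
  set η := π / (4 * n)
  have hη : η ≤ 1 / 2 := by
    rw [div_le_iff₀ (by positivity)]
    linarith [Real.pi_le_four]
  have h := infDist_mul_one_sub_le hM hMc hne
    (fun y hy => norm_le_diam_div_two_of_neg_eq hM.isBounded hsymm hy) (by positivity : 0 ≤ η)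
    (U := {v | ∃ i ∈ Finset.Icc 1 (4 * n), v = uvec ((i : ℝ) * π / (2 * n))})
    (fun u hu => by
      obtain ⟨i, hi, hiu⟩ := exists_uvec_near (n := n) (by omega) hu
      exact ⟨_, ⟨i, hi, rfl⟩, hiu⟩)
    (x := x) (by rintro _ ⟨i, hi, rfl⟩; exact mem_iInter₂.1 hx i hi)
  obtain ⟨m, hm, hxm⟩ := hM.exists_infDist_eq_dist hne x
  refine mem_cthickening_of_dist_le x m _ M hm ?_
  have hd : 0 ≤ diam M := diam_nonneg
  have : diam M * π / (2 * n) = 2 * diam M * η := by simp only [η]; field_simp; ring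
  rw [hxm] at h
  nlinarith [dist_nonneg (x := x) (y := m)]

lemma ediam_le_volume {I : Set ℝ} (hI : I.OrdConnected) (hb : Bornology.IsBounded I) :
    ediam I ≤ volume I := by
  rcases I.eq_empty_or_nonempty with rfl | hne
  · simp
  rw [Real.ediam_eq hb, ← Real.volume_Ioo]
  exact measure_mono <|
    IsConnected.Ioo_csInf_csSup_subset ⟨hne, hI.isPreconnected⟩ hb.bddBelow hb.bddAbove

lemma volume_add_le_of_ordConnected {I : Set ℝ} (hI : I.OrdConnected) (hb : Bornology.IsBounded I)
    (J : Set ℝ) : volume (I + J) ≤ volume I + ediam J :=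
  calc volume (I + J) ≤ ediam (I + J) := Real.volume_le_diam _
    _ ≤ ediam I + ediam J := ediam_add_le I J
    _ ≤ volume I + ediam J := by grw [ediam_le_volume hI hb]

lemma Convex.preimage_prodMk {K : Set (ℝ × ℝ)} (hK : Convex ℝ K) (x : ℝ) :
    Convex ℝ (Prod.mk x ⁻¹' K) := by
  intro y₁ h₁ y₂ h₂ a b ha hb hab
  simpa [← add_mul, hab] using hK h₁ h₂ ha hb hab

lemma volume_add_zero_prod_le {K : Set (ℝ × ℝ)} (hK : IsCompact K) (hKc : Convex ℝ K)
    {J : Set ℝ} (hJ : IsCompact J) :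
    volume (K + {0} ×ˢ J) ≤ volume K + ediam J * volume (Prod.fst '' K) := by
  have hslice (x : ℝ) : Prod.mk x ⁻¹' (K + {0} ×ˢ J) = Prod.mk x ⁻¹' K + J := by
    ext y
    simp [mem_add]
  have hbound (x : ℝ) : volume (Prod.mk x ⁻¹' (K + {0} ×ˢ J)) ≤
      volume (Prod.mk x ⁻¹' K) + (Prod.fst '' K).indicator (fun _ => ediam J) x := by
    by_cases hx : x ∈ Prod.fst '' K
    · rw [indicator_of_mem hx, hslice]
      refine volume_add_le_of_ordConnected (hKc.preimage_prodMk x).ordConnected ?_ J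
      exact (hK.image continuous_snd).isBounded.subset fun y hy => ⟨_, hy, rfl⟩
    · have : Prod.mk x ⁻¹' K = ∅ := eq_empty_of_forall_notMem fun y hy => hx ⟨_, hy, rfl⟩
      simp [hslice, this]
  have hfst : MeasurableSet (Prod.fst '' K) := (hK.image continuous_fst).measurableSet
  rw [Measure.volume_eq_prod,
    Measure.prod_apply (hK.add (isCompact_singleton.prod hJ)).measurableSet,
    Measure.prod_apply hK.measurableSet]
  calc _ ≤ ∫⁻ x, volume (Prod.mk x ⁻¹' K) + (Prod.fst '' K).indicator (fun _ => ediam J) x :=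
        lintegral_mono hbound
    _ = _ := by
      rw [lintegral_add_right _ (measurable_const.indicator hfst),
        lintegral_indicator_const hfst]

lemma volume_add_prod_zero_le {K : Set (ℝ × ℝ)} (hK : IsCompact K) (hKc : Convex ℝ K)
    {J : Set ℝ} (hJ : IsCompact J) :
    volume (K + J ×ˢ {0}) ≤ volume K + ediam J * volume (Prod.snd '' K) := by
  let σ := ContinuousLinearEquiv.prodComm ℝ ℝ ℝ
  have hσ : MeasurePreserving σ := Measure.measurePreserving_swap
  have hvol (S : Set (ℝ × ℝ)) : volume (σ '' S) = volume S := by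
    rw [← hσ.measure_preimage_emb σ.toHomeomorph.measurableEmbedding,
      σ.injective.preimage_image]
  have hadd : σ '' (K + J ×ˢ {0}) = σ '' K + {0} ×ˢ J := by
    rw [image_add σ]
    congr 1
    exact image_swap_prod _ _
  have h := volume_add_zero_prod_le (hK.image σ.continuous) (hKc.linear_image σ.toLinearMap) hJ
  rwa [← hadd, hvol, hvol, image_image] at h

lemma volume_cthickening_le_of_convex_prod {D : Set (ℝ × ℝ)} (hD : IsCompact D)
    (hDc : Convex ℝ D) {r : ℝ} (hr : 0 ≤ r) :
    volume (cthickening r D) ≤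
      volume D + 4 * ENNReal.ofReal r * ediam D + 4 * ENNReal.ofReal r ^ 2 := by
  let B := closedBall (0 : ℝ) r
  have hB : IsCompact B := isCompact_closedBall 0 r
  have hBc : Convex ℝ B := convex_closedBall 0 r
  have hBd : ediam B = 2 * ENNReal.ofReal r := by
    rw [show B = Icc (0 - r) (0 + r) from Real.closedBall_eq_Icc, Real.ediam_Icc,
      ← ENNReal.ofReal_ofNat 2, ← ENNReal.ofReal_mul zero_le_two]
    ring_nf
  have hsplit : cthickening r D = (D + B ×ˢ {0}) + {0} ×ˢ B := by
    rw [← hD.add_closedBall_zero hr, show closedBall (0 : ℝ × ℝ) r = B ×ˢ B from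
      (closedBall_prod_same 0 0 r).symm, add_assoc,
      prod_add_prod_comm, singleton_zero, add_zero, zero_add]
  have hD' : IsCompact (D + B ×ˢ {0}) := hD.add (hB.prod isCompact_singleton)
  have hDc' : Convex ℝ (D + B ×ˢ {0}) := hDc.add (hBc.prod (convex_singleton 0))
  have hfst : Prod.fst '' (D + B ×ˢ {0}) = Prod.fst '' D + B := by
    exact (image_add (AddMonoidHom.fst ℝ ℝ)).trans
      (by rw [AddMonoidHom.coe_fst, fst_image_prod _ (singleton_nonempty 0)])
  have hproj (f : ℝ × ℝ → ℝ) (hf : LipschitzWith 1 f) : volume (f '' D) ≤ ediam D :=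
    (Real.volume_le_diam _).trans (by simpa using hf.ediam_image_le D)
  calc volume (cthickening r D)
      ≤ volume (D + B ×ˢ {0}) + ediam B * volume (Prod.fst '' (D + B ×ˢ {0})) := by
        rw [hsplit]; exact volume_add_zero_prod_le hD' hDc' hB
    _ ≤ volume D + ediam B * volume (Prod.snd '' D) +
          ediam B * (volume (Prod.fst '' D) + ediam B) := by
        rw [hfst]
        gcongr
        · exact volume_add_prod_zero_le hD hDc hB
        · exact volume_add_le_of_ordConnected
            (hDc.linear_image (LinearMap.fst ℝ ℝ ℝ)).ordConnected
            (hD.image continuous_fst).isBounded B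
    _ ≤ volume D + ediam B * ediam D + ediam B * (ediam D + ediam B) := by
        gcongr
        · exact hproj _ LipschitzWith.prod_snd
        · exact hproj _ LipschitzWith.prod_fst
    _ = _ := by rw [hBd]; ring

/-- Cartesian coordinates on `E2`; the product `ℝ × ℝ` carries the sup metric. -/
def coordEquiv : E2 ≃L[ℝ] ℝ × ℝ :=
  (EuclideanSpace.equiv (Fin 2) ℝ).trans (ContinuousLinearEquiv.finTwoArrow ℝ ℝ)

lemma measurePreserving_coordEquiv : MeasurePreserving coordEquiv :=
  (volume_preserving_finTwoArrow ℝ).comp (PiLp.volume_preserving_ofLp (Fin 2))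

lemma volume_image_coordEquiv (S : Set E2) : volume (coordEquiv '' S) = volume S := by
  rw [← measurePreserving_coordEquiv.measure_preimage_emb
    coordEquiv.toHomeomorph.measurableEmbedding, coordEquiv.injective.preimage_image]

lemma lipschitzWith_coordEquiv : LipschitzWith 1 coordEquiv := by
  simpa using AddMonoidHomClass.lipschitz_of_bound coordEquiv 1 fun x => by
    rw [one_mul, Prod.norm_def]
    exact max_le (PiLp.norm_apply_le x 0) (PiLp.norm_apply_le x 1)

lemma IsCompact.exists_dist_le_of_mem_cthickening {E : Type*} [PseudoMetricSpace E]
    [ProperSpace E] {s : Set E} (hs : IsCompact s) {δ : ℝ} (hδ : 0 ≤ δ) {x : E}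
    (hx : x ∈ cthickening δ s) : ∃ y ∈ s, dist x y ≤ δ := by
  simpa using (hs.cthickening_eq_biUnion_closedBall hδ).subset hx

lemma volume_cthickening_le_of_convex {D : Set E2} (hD : IsCompact D) (hDc : Convex ℝ D)
    {r : ℝ} (hr : 0 ≤ r) :
    volume (cthickening r D) ≤
      volume D + 4 * ENNReal.ofReal r * ediam D + 4 * ENNReal.ofReal r ^ 2 := by
  have himage : coordEquiv '' cthickening r D ⊆ cthickening r (coordEquiv '' D) := by
    rintro _ ⟨p, hp, rfl⟩
    obtain ⟨q, hq, hpq⟩ := hD.exists_dist_le_of_mem_cthickening hr hp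
    refine mem_cthickening_of_dist_le _ _ r _ (mem_image_of_mem _ hq) ?_
    simpa using (lipschitzWith_coordEquiv.dist_le_mul p q).trans (by simpa using hpq)
  calc volume (cthickening r D) = volume (coordEquiv '' cthickening r D) :=
        (volume_image_coordEquiv _).symm
    _ ≤ volume (cthickening r (coordEquiv '' D)) := measure_mono himage
    _ ≤ volume (coordEquiv '' D) + 4 * ENNReal.ofReal r * ediam (coordEquiv '' D) +
          4 * ENNReal.ofReal r ^ 2 :=
        volume_cthickening_le_of_convex_prod (hD.image coordEquiv.continuous)
          (hDc.linear_image coordEquiv.toLinearMap) hr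
    _ ≤ _ := by
        rw [volume_image_coordEquiv]
        grw [lipschitzWith_coordEquiv.ediam_image_le D]
        simp

lemma ediam_sub_le {E : Type*} [SeminormedAddCommGroup E] (A B : Set E) :
    ediam (A - B) ≤ ediam A + ediam B := by
  rw [sub_eq_add_neg, ← image_neg_eq_neg, ← isometry_neg.ediam_image B]
  exact ediam_add_le A _

lemma sub_image_subset_cthickening {E : Type*} [SeminormedAddCommGroup E] [ProperSpace E]
    {f : E → E} (hf : Isometry f) {A A' B B' : Set E} (hA' : IsCompact A') (hB' : IsCompact B')
    {s : ℝ} (hs : 0 ≤ s) (hA : A ⊆ cthickening s A') (hB : B ⊆ cthickening s B') :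
    A - f '' B ⊆ cthickening (2 * s) (A' - f '' B') := by
  rintro _ ⟨a, ha, _, ⟨b, hb, rfl⟩, rfl⟩
  obtain ⟨a', ha', haa'⟩ := hA'.exists_dist_le_of_mem_cthickening hs (hA ha)
  obtain ⟨b', hb', hbb'⟩ := hB'.exists_dist_le_of_mem_cthickening hs (hB hb)
  refine mem_cthickening_of_dist_le _ (a' - f b') _ _ (sub_mem_sub ha' (mem_image_of_mem f hb')) ?_
  calc dist (a - f b) (a' - f b') ≤ dist a a' + dist (f b) (f b') := dist_sub_sub_le _ _ _ _
    _ ≤ 2 * s := by rw [hf.dist_eq]; linarith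

lemma Ex_eq (θ : ℝ) (M : Set E2) : Ex θ M = (volume (M - rot θ '' M)).toReal := by
  unfold Ex
  congr 2
  ext p
  simp [mem_sub, eq_comm]

lemma abs_toReal_sub_toReal_le {a b : ℝ≥0∞} {c : ℝ} (ha : a ≠ ⊤) (hab : a ≤ b)
    (hb : b ≤ a + ENNReal.ofReal c) (hc : 0 ≤ c) : |a.toReal - b.toReal| ≤ c := by
  have hb' : b ≠ ⊤ := ne_top_of_le_ne_top (by simp [ha]) hb
  have h := ENNReal.toReal_mono (by simp [ha]) hb
  rw [ENNReal.toReal_add ha ENNReal.ofReal_ne_top, ENNReal.toReal_ofReal hc] at h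
  rw [abs_sub_comm, abs_of_nonneg (sub_nonneg.2 (ENNReal.toReal_mono hb' hab))]
  linarith

lemma abs_Ex_sub_Ex_canonApprox_le {M : Set E2} (hM : IsCompact M) (hMc : Convex ℝ M)
    (hne : M.Nonempty) (hsymm : M = -M) {n : ℕ} (hn : 2 ≤ n) (θ : ℝ) :
    |Ex θ M - Ex θ (canonApprox M n)| ≤
      16 * diam M * (diam M * π / (2 * n)) + 16 * (diam M * π / (2 * n)) ^ 2 := by
  set τ := diam M * π / (2 * n)
  have hτ : 0 ≤ τ := by positivity
  set Mn := canonApprox M n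
  set D := M - rot θ '' M with hD_def
  have hMMn : M ⊆ Mn := subset_canonApprox_s18 hM n
  have hD : IsCompact D := by
    rw [hD_def, sub_eq_add_neg]
    exact hM.add (hM.image (rotLI θ).continuous).neg
  have hDc : Convex ℝ D := hMc.sub (hMc.linear_image (rotLI θ).toLinearMap)
  have hDdiam : ediam D ≤ ENNReal.ofReal (2 * diam M) := by
    calc ediam D ≤ ediam M + ediam (rotLI θ '' M) := ediam_sub_le _ _
      _ = ediam M + ediam M := by rw [(rotLI θ).isometry.ediam_image]
      _ = _ := by
        rw [← two_mul, ENNReal.ofReal_mul zero_le_two, Metric.diam,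
          ENNReal.ofReal_toReal hM.isBounded.ediam_ne_top, ENNReal.ofReal_ofNat]
  have hthick : Mn - rot θ '' Mn ⊆ cthickening (2 * τ) D :=
    sub_image_subset_cthickening (rotLI θ).isometry hM hM hτ
      (canonApprox_subset_cthickening hM hMc hne hsymm hn)
      (canonApprox_subset_cthickening hM hMc hne hsymm hn)
  rw [Ex_eq, Ex_eq]
  refine abs_toReal_sub_toReal_le hD.measure_lt_top.ne
    (measure_mono (sub_subset_sub hMMn (image_mono hMMn))) ?_ (by positivity)
  calc volume (Mn - rot θ '' Mn) ≤ volume (cthickening (2 * τ) D) := measure_mono hthick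
    _ ≤ volume D + 4 * ENNReal.ofReal (2 * τ) * ediam D + 4 * ENNReal.ofReal (2 * τ) ^ 2 :=
        volume_cthickening_le_of_convex hD hDc (by positivity)
    _ ≤ volume D + 4 * ENNReal.ofReal (2 * τ) * ENNReal.ofReal (2 * diam M) +
          4 * ENNReal.ofReal (2 * τ) ^ 2 := by gcongr
    _ = volume D + ENNReal.ofReal (16 * diam M * τ + 16 * τ ^ 2) := by
        rw [add_assoc]
        congr 1
        rw [← ENNReal.ofReal_pow (by positivity), ← ENNReal.ofReal_ofNat 4,
          ← ENNReal.ofReal_mul (by norm_num), ← ENNReal.ofReal_mul (by positivity),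
          ← ENNReal.ofReal_mul (by norm_num),
          ← ENNReal.ofReal_add (by positivity) (by positivity)]
        ring_nf

lemma abs_Ex_sub_Ex_canonApprox_two_mul_le {M : Set E2} (hM : IsCompact M) (hMc : Convex ℝ M)
    (hne : M.Nonempty) (hsymm : M = -M) {k : ℕ} (hk : 1 ≤ k) (θ : ℝ) :
    |Ex θ M - Ex θ (canonApprox M (2 * k))| ≤
      16 * diam M * (π * (1 + √2) * diam M / (4 * k)) +
        4 * π * (π * (1 + √2) * diam M / (4 * k)) ^ 2 := by
  set τ := diam M * π / (2 * ((2 * k : ℕ) : ℝ))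
  have hτ : 0 ≤ τ := by positivity
  have hε : π * (1 + √2) * diam M / (4 * k) = (1 + √2) * τ := by
    simp only [τ]; push_cast; ring
  have hsqrt : 1 ≤ √2 := Real.one_le_sqrt.2 one_le_two
  rw [hε]
  calc |Ex θ M - Ex θ (canonApprox M (2 * k))|
      ≤ 16 * diam M * τ + 4 * 1 * (2 * τ) ^ 2 := by
        convert abs_Ex_sub_Ex_canonApprox_le hM hMc hne hsymm (n := 2 * k) (by omega) θ using 2
        ring
    _ ≤ 16 * diam M * ((1 + √2) * τ) + 4 * π * ((1 + √2) * τ) ^ 2 := by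
        gcongr
        · nlinarith
        · linarith [Real.pi_gt_three]
        · nlinarith

end

theorem stmt18 (M : Set E2) (hne : M.Nonempty) (hcpt : IsCompact M) (hconv : Convex ℝ M)
    (hsymm : M = -M) :
    (∀ k : ℕ, 1 ≤ k → ∀ θ : ℝ,
      |Ex θ M - Ex θ (canonApprox M (2 * k))| ≤
        16 * Metric.diam M * (π * (1 + Real.sqrt 2) * Metric.diam M / (4 * k)) +
          4 * π * (π * (1 + Real.sqrt 2) * Metric.diam M / (4 * k)) ^ 2) ∧
    ∃ C : ℝ, ∀ k : ℕ, 1 ≤ k → ∀ θ : ℝ,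
      |Ex θ M - Ex θ (canonApprox M (2 * k))| ≤ C / k := by
  have hbound := fun k (hk : 1 ≤ k) θ =>
    abs_Ex_sub_Ex_canonApprox_two_mul_le hcpt hconv hne hsymm hk θ
  set c := π * (1 + Real.sqrt 2) * Metric.diam M / 4
  refine ⟨hbound, 16 * Metric.diam M * c + 4 * π * c ^ 2,
    fun k hk θ => (hbound k hk θ).trans ?_⟩
  have hk' : (1 : ℝ) ≤ k := by exact_mod_cast hk
  have hc : 0 ≤ c := by have := Metric.diam_nonneg (s := M); positivity
  rw [show π * (1 + Real.sqrt 2) * Metric.diam M / (4 * k) = c / k by ring, div_pow, add_div,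
    mul_div_assoc, mul_div_assoc]
  gcongr
  exact le_self_pow₀ hk' two_ne_zero
end
end
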